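/- Let a > 0, let F ∈ 𝓢(S_a), let ε > 0 and let m ∈ ℕ. Then there exists an entire function h : ℂ → ℂ of uniform exponential type with rapid decay, i.e. there is R > 0 with sup_{z ∈ ℂ} e^{-R|Re z|} (1+|z|)^N |h(z)| < ∞ for every N ∈ ℕ, such that max_{N ≤ m, k ≤ m} sup_{z ∈ S_a} (1+|z|)^N |F^{(k)}(z) − h^{(k)}(z)| < ε. That is, Paley–Wiener functions are dense in the strip-Schwartz space 𝓢(S_a). -/

import Mathlib

/-!
Convolve `F` along the imaginary axis with a dilated Paley–Wiener kernel. For a smooth bump `g`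
supported in `[-1, 1]`, `K w = ∫ g ξ * exp (ξ * w) dξ` is entire, and integrating by parts `N`
times gives `‖w‖ ^ N * ‖K w‖ ≤ C_N * exp |re w|`; by Fourier inversion `∫ K (i v) dv = 2π g 0`.
Hence `h z = ∫ F (i t) * c * K (c * (z - i t)) dt` is entire of exponential type `c` with rapid
decay. On the strip, `h` agrees on the imaginary axis, hence everywhere by the identity theorem,
with `z ↦ ∫ F (z - i u) * c * K (i c u) du`, so `h⁽ᵏ⁾` is the average of `F⁽ᵏ⁾` against the
approximate identity `u ↦ c * K (i c u)`. The mean value theorem on the vertical segment from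
`z - i u` to `z` bounds the weighted error by `C * ∫ |u| (1 + |u|) ^ N * c * ‖K (i c u)‖ du`,
which is `O(1 / c)`.
-/

open MeasureTheory Complex

/-- The closed strip `S_a = {z : |Re z| ≤ a}`. -/
def Strip (a : ℝ) : Set ℂ := {z : ℂ | |z.re| ≤ a}

/-- The open strip `S_a° = {z : |Re z| < a}`. -/
def StripO (a : ℝ) : Set ℂ := {z : ℂ | |z.re| < a}

/-- Membership in the strip-Schwartz space `𝓢(S_a)`: `F` is continuous on the closed strip,
holomorphic on the open strip, `Fd k` is the continuous extension to the closed strip of the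
`k`-th complex derivative of `F`, and all seminorms
`sup_{z ∈ S_a} (1+|z|)^N |Fd k z|` are finite. -/
def StripSchwartz (a : ℝ) (F : ℂ → ℂ) (Fd : ℕ → ℂ → ℂ) : Prop :=
  ContinuousOn F (Strip a) ∧
  DifferentiableOn ℂ F (StripO a) ∧
  (∀ z ∈ Strip a, Fd 0 z = F z) ∧
  (∀ k : ℕ, ∀ z ∈ StripO a, Fd k z = iteratedDeriv k F z) ∧
  (∀ k : ℕ, ContinuousOn (Fd k) (Strip a)) ∧
  (∀ N k : ℕ, ∃ C : ℝ, ∀ z ∈ Strip a,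
    (1 + ‖z‖) ^ N * ‖Fd k z‖ ≤ C)

open Set Filter Topology FourierTransform
open scoped ContDiff

noncomputable section

lemma mul_abs_re_le (R : ℝ) (z w : ℂ) : R * |z.re| ≤ R * |w.re| + |R| * ‖z - w‖ := by
  have h : |z.re| - |w.re| ≤ ‖z - w‖ := by
    have := abs_re_le_norm (z - w)
    rw [sub_re] at this
    linarith [abs_sub_abs_le_abs_sub z.re w.re]
  have h' : |w.re| - |z.re| ≤ ‖z - w‖ := by
    have := abs_re_le_norm (z - w)
    rw [sub_re, abs_sub_comm] at this
    linarith [abs_sub_abs_le_abs_sub w.re z.re]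
  rcases le_total 0 R with hR | hR
  · rw [abs_of_nonneg hR]; nlinarith
  · rw [abs_of_nonpos hR]; nlinarith

lemma one_add_norm_le_mul (z w : ℂ) : 1 + ‖z‖ ≤ (1 + ‖w‖) * (1 + ‖z - w‖) := by
  nlinarith [norm_le_norm_add_norm_sub' z w, norm_nonneg w, norm_nonneg (z - w)]

def HasRapidDecayOfType (R : ℝ) (f : ℂ → ℂ) : Prop :=
  ∀ N : ℕ, ∃ C, ∀ z, (1 + ‖z‖) ^ N * ‖f z‖ ≤ C * Real.exp (R * |z.re|)

def RapidDecay (φ : ℝ → ℂ) : Prop := ∀ N : ℕ, ∃ C, ∀ t, (1 + |t|) ^ N * ‖φ t‖ ≤ C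

def verticalConv (φ : ℝ → ℂ) (K : ℂ → ℂ) (z : ℂ) : ℂ := ∫ t : ℝ, φ t * K (z - I * t)

def verticalAverage (f : ℂ → ℂ) (μ : ℝ → ℂ) (z : ℂ) : ℂ := ∫ u : ℝ, f (z - I * u) * μ u

def dilate (c : ℝ) (K : ℂ → ℂ) (w : ℂ) : ℂ := c * K (c * w)

lemma Differentiable.dilate {K : ℂ → ℂ} (hK : Differentiable ℂ K) (c : ℝ) :
    Differentiable ℂ (dilate c K) := by
  unfold _root_.dilate; fun_prop

lemma DifferentiableOn.iteratedDeriv_of_isOpen {f : ℂ → ℂ} {s : Set ℂ}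
    (hf : DifferentiableOn ℂ f s) (hs : IsOpen s) (k : ℕ) :
    DifferentiableOn ℂ (iteratedDeriv k f) s := by
  rw [iteratedDeriv_eq_iterate]
  exact ((hf.analyticOnNhd hs).iterated_deriv k).differentiableOn

lemma RapidDecay.integrable_one_add_pow_mul {φ : ℝ → ℂ} (hφ : RapidDecay φ)
    (hm : AEStronglyMeasurable φ) (N : ℕ) : Integrable fun t => (1 + |t|) ^ N * ‖φ t‖ := by
  obtain ⟨C, hC⟩ := hφ (N + 2)
  refine (integrable_inv_one_add_sq.const_mul C).mono' (by fun_prop) (ae_of_all _ fun t => ?_)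
  have h1 : (0 : ℝ) < 1 + t ^ 2 := by positivity
  rw [Real.norm_of_nonneg (by positivity), ← div_eq_mul_inv, le_div_iff₀ h1]
  calc (1 + |t|) ^ N * ‖φ t‖ * (1 + t ^ 2) ≤ (1 + |t|) ^ N * ‖φ t‖ * (1 + |t|) ^ 2 := by
        gcongr; nlinarith [abs_nonneg t, sq_abs t]
    _ = (1 + |t|) ^ (N + 2) * ‖φ t‖ := by ring
    _ ≤ C := hC t

lemma RapidDecay.integrable {φ : ℝ → ℂ} (hφ : RapidDecay φ) (hm : AEStronglyMeasurable φ) :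
    Integrable φ :=
  (integrable_norm_iff hm).1 (by simpa using hφ.integrable_one_add_pow_mul hm 0)

namespace HasRapidDecayOfType

variable {R : ℝ} {K : ℂ → ℂ}

lemma of_norm_pow_mul_le (h : ∀ N : ℕ, ∃ C, ∀ z, ‖z‖ ^ N * ‖K z‖ ≤ C * Real.exp (R * |z.re|)) :
    HasRapidDecayOfType R K := by
  intro N
  obtain ⟨C₀, hC₀⟩ := h 0
  obtain ⟨C, hC⟩ := h N
  refine ⟨2 ^ (N - 1) * (C₀ + C), fun z => ?_⟩
  calc (1 + ‖z‖) ^ N * ‖K z‖ ≤ 2 ^ (N - 1) * (1 + ‖z‖ ^ N) * ‖K z‖ := by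
        gcongr; simpa using add_pow_le zero_le_one (norm_nonneg z) N
    _ = 2 ^ (N - 1) * (‖z‖ ^ 0 * ‖K z‖ + ‖z‖ ^ N * ‖K z‖) := by ring
    _ ≤ 2 ^ (N - 1) * (C₀ * Real.exp (R * |z.re|) + C * Real.exp (R * |z.re|)) :=
        mul_le_mul_of_nonneg_left (add_le_add (hC₀ z) (hC z)) (by positivity)
    _ = _ := by ring

lemma exists_exp_neg_mul_le (hK : HasRapidDecayOfType R K) (N : ℕ) :
    ∃ C, ∀ z, Real.exp (-(R * |z.re|)) * (1 + ‖z‖) ^ N * ‖K z‖ ≤ C := by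
  obtain ⟨C, hC⟩ := hK N
  refine ⟨C, fun z => ?_⟩
  calc Real.exp (-(R * |z.re|)) * (1 + ‖z‖) ^ N * ‖K z‖
      ≤ Real.exp (-(R * |z.re|)) * (C * Real.exp (R * |z.re|)) := by
        rw [mul_assoc]; exact mul_le_mul_of_nonneg_left (hC z) (Real.exp_pos _).le
    _ = C := by rw [mul_left_comm, ← Real.exp_add, neg_add_cancel, Real.exp_zero, mul_one]

lemma rapidDecay_I_mul (hK : HasRapidDecayOfType R K) : RapidDecay fun v : ℝ => K (I * v) := by
  intro N
  obtain ⟨C, hC⟩ := hK N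
  exact ⟨C, fun v => by simpa using hC (I * v)⟩

lemma dilate (hK : HasRapidDecayOfType R K) {c : ℝ} (hc : 0 < c) :
    HasRapidDecayOfType (c * R) (_root_.dilate c K) := by
  intro N
  obtain ⟨C, hC⟩ := hK N
  refine ⟨(1 + c⁻¹) ^ N * c * C, fun z => ?_⟩
  have hz : 1 + ‖z‖ ≤ (1 + c⁻¹) * (1 + ‖(c : ℂ) * z‖) := by
    rw [norm_mul, norm_real, Real.norm_of_nonneg hc.le]
    have : c⁻¹ * (c * ‖z‖) = ‖z‖ := by field_simp
    nlinarith [norm_nonneg z, inv_pos.2 hc]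
  have hre : R * |((c : ℂ) * z).re| = c * R * |z.re| := by
    rw [re_ofReal_mul, abs_mul, abs_of_pos hc]; ring
  calc (1 + ‖z‖) ^ N * ‖_root_.dilate c K z‖
      ≤ ((1 + c⁻¹) * (1 + ‖(c : ℂ) * z‖)) ^ N * (c * ‖K (c * z)‖) := by
        rw [_root_.dilate, norm_mul, norm_real, Real.norm_of_nonneg hc.le]
        gcongr
    _ = (1 + c⁻¹) ^ N * c * ((1 + ‖(c : ℂ) * z‖) ^ N * ‖K (c * z)‖) := by rw [mul_pow]; ring
    _ ≤ (1 + c⁻¹) ^ N * c * (C * Real.exp (c * R * |z.re|)) := by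
        rw [← hre]; exact mul_le_mul_of_nonneg_left (hC _) (by positivity)
    _ = _ := by ring

lemma verticalConv (hK : HasRapidDecayOfType R K) {φ : ℝ → ℂ} (hφ : RapidDecay φ)
    (hm : AEStronglyMeasurable φ) : HasRapidDecayOfType R (_root_.verticalConv φ K) := by
  intro N
  obtain ⟨C, hC⟩ := hK N
  refine ⟨C * ∫ t, (1 + |t|) ^ N * ‖φ t‖, fun z => ?_⟩
  have hpt : ∀ t : ℝ, ‖(((1 + ‖z‖) ^ N : ℝ) : ℂ) * (φ t * K (z - I * t))‖ ≤
      C * Real.exp (R * |z.re|) * ((1 + |t|) ^ N * ‖φ t‖) := fun t => by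
    have hre : (z - I * t).re = z.re := by simp
    rw [norm_mul, norm_mul, norm_real, Real.norm_of_nonneg (by positivity)]
    calc (1 + ‖z‖) ^ N * (‖φ t‖ * ‖K (z - I * t)‖)
        ≤ ((1 + |t|) * (1 + ‖z - I * t‖)) ^ N * (‖φ t‖ * ‖K (z - I * t)‖) := by
          gcongr; simpa using one_add_norm_le_mul z (I * t)
      _ = (1 + |t|) ^ N * ‖φ t‖ * ((1 + ‖z - I * t‖) ^ N * ‖K (z - I * t)‖) := by
          rw [mul_pow]; ring
      _ ≤ (1 + |t|) ^ N * ‖φ t‖ * (C * Real.exp (R * |z.re|)) := by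
          rw [← hre]; exact mul_le_mul_of_nonneg_left (hC _) (by positivity)
      _ = _ := by ring
  calc (1 + ‖z‖) ^ N * ‖_root_.verticalConv φ K z‖
      = ‖∫ t, (((1 + ‖z‖) ^ N : ℝ) : ℂ) * (φ t * K (z - I * t))‖ := by
        rw [integral_const_mul, norm_mul, norm_real, Real.norm_of_nonneg (by positivity),
          _root_.verticalConv]
    _ ≤ ∫ t, C * Real.exp (R * |z.re|) * ((1 + |t|) ^ N * ‖φ t‖) :=
        norm_integral_le_of_norm_le ((hφ.integrable_one_add_pow_mul hm N).const_mul _)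
          (ae_of_all _ hpt)
    _ = _ := by rw [integral_const_mul]; ring

lemma exists_norm_deriv_le (hK : HasRapidDecayOfType R K) (hd : Differentiable ℂ K) :
    ∃ C, ∀ w, ‖deriv K w‖ ≤ C * Real.exp (R * |w.re| + |R|) := by
  obtain ⟨C, hC⟩ := hK 0
  simp only [pow_zero, one_mul] at hC
  have hC0 : 0 ≤ C := nonneg_of_mul_nonneg_left ((norm_nonneg _).trans (hC 0)) (Real.exp_pos _)
  refine ⟨C, fun w => ?_⟩
  have hsphere : ∀ ζ ∈ Metric.sphere w 1, ‖K ζ‖ ≤ C * Real.exp (R * |w.re| + |R|) := by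
    intro ζ hζ
    refine (hC ζ).trans (mul_le_mul_of_nonneg_left (Real.exp_le_exp.2 ?_) hC0)
    simpa [mem_sphere_iff_norm.1 hζ] using mul_abs_re_le R ζ w
  simpa using norm_deriv_le_of_forall_mem_sphere_norm_le one_pos hd.diffContOnCl hsphere

lemma differentiable_verticalConv (hK : HasRapidDecayOfType R K) (hd : Differentiable ℂ K)
    {φ : ℝ → ℂ} (hφ : Integrable φ) : Differentiable ℂ (_root_.verticalConv φ K) := by
  obtain ⟨C, hC⟩ := hK 0
  simp only [pow_zero, one_mul] at hC
  obtain ⟨C', hC'⟩ := hK.exists_norm_deriv_le hd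
  have hKc : Continuous K := hd.continuous
  have hK'c : Continuous (deriv K) := (hd.contDiff (n := 1)).continuous_deriv le_rfl
  intro z₀
  have hmeas : ∀ z, AEStronglyMeasurable fun t : ℝ => φ t * K (z - I * t) := fun z =>
    hφ.aestronglyMeasurable.mul (by fun_prop)
  have hint : Integrable fun t : ℝ => φ t * K (z₀ - I * t) :=
    hφ.mul_bdd (by fun_prop) (ae_of_all _ fun t => by simpa using hC (z₀ - I * t))
  have hbound : ∀ t : ℝ, ∀ z ∈ Metric.ball z₀ 1, ‖φ t * deriv K (z - I * t)‖ ≤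
      ‖φ t‖ * (C' * Real.exp (R * |z₀.re| + 2 * |R|)) := by
    intro t z hz
    rw [norm_mul]
    refine mul_le_mul_of_nonneg_left ((hC' _).trans ?_) (norm_nonneg _)
    have h1 := mul_abs_re_le R z z₀
    have h2 : ‖z - z₀‖ < 1 := by simpa [dist_eq_norm] using hz
    have hC'0 : 0 ≤ C' := nonneg_of_mul_nonneg_left ((norm_nonneg _).trans (hC' 0)) (Real.exp_pos _)
    have hre : (z - I * t).re = z.re := by simp
    refine mul_le_mul_of_nonneg_left (Real.exp_le_exp.2 ?_) hC'0
    rw [hre]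
    nlinarith [abs_nonneg R]
  refine (hasDerivAt_integral_of_dominated_loc_of_deriv_le
    (F := fun z t => φ t * K (z - I * t)) (F' := fun z t => φ t * deriv K (z - I * t))
    (Metric.ball_mem_nhds z₀ one_pos) (Filter.Eventually.of_forall hmeas) hint
    (hφ.aestronglyMeasurable.mul (by fun_prop)) (ae_of_all _ hbound) (hφ.norm.mul_const _)
    (ae_of_all _ fun t z _ => ?_)).2.differentiableAt
  have := (hd (z - I * t)).hasDerivAt.comp z ((hasDerivAt_id z).sub_const (I * t))
  simpa using this.const_mul (φ t)

end HasRapidDecayOfType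

section FourierLaplace

variable {g : ℝ → ℂ} {r : ℝ}

def fourierLaplace (g : ℝ → ℂ) (w : ℂ) : ℂ := ∫ ξ : ℝ, g ξ * cexp (ξ * w)

lemma hasCompactSupport_of_tsupport_subset_Icc (hsupp : tsupport g ⊆ Icc (-r) r) :
    HasCompactSupport g :=
  isCompact_Icc.of_isClosed_subset (isClosed_tsupport g) hsupp

lemma integrable_mul_cexp (hc : Continuous g) (hs : HasCompactSupport g) (w : ℂ) :
    Integrable fun ξ : ℝ => g ξ * cexp (ξ * w) :=
  (hc.mul (by fun_prop)).integrable_of_hasCompactSupport hs.mul_right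

lemma norm_mul_cexp_le (hsupp : tsupport g ⊆ Icc (-r) r) (w : ℂ) (ξ : ℝ) :
    ‖g ξ * cexp (ξ * w)‖ ≤ ‖g ξ‖ * Real.exp (r * |w.re|) := by
  by_cases hξ : ξ ∈ tsupport g
  · have hξr : |ξ| ≤ r := abs_le.2 (hsupp hξ)
    rw [norm_mul, norm_exp]
    gcongr
    calc ((ξ : ℂ) * w).re = ξ * w.re := by simp
      _ ≤ |ξ| * |w.re| := by rw [← abs_mul]; exact le_abs_self _
      _ ≤ r * |w.re| := by gcongr
  · simp [image_eq_zero_of_notMem_tsupport hξ]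

lemma norm_fourierLaplace_le (hc : Continuous g) (hsupp : tsupport g ⊆ Icc (-r) r) (w : ℂ) :
    ‖fourierLaplace g w‖ ≤ (∫ ξ, ‖g ξ‖) * Real.exp (r * |w.re|) := by
  rw [← integral_mul_const]
  exact norm_integral_le_of_norm_le ((hc.integrable_of_hasCompactSupport
    (hasCompactSupport_of_tsupport_subset_Icc hsupp)).norm.mul_const _)
    (ae_of_all _ (norm_mul_cexp_le hsupp w))

lemma hasDerivAt_fourierLaplace (hc : Continuous g) (hsupp : tsupport g ⊆ Icc (-r) r) (w₀ : ℂ) :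
    HasDerivAt (fourierLaplace g) (fourierLaplace (fun ξ => ξ * g ξ) w₀) w₀ := by
  have hsupp' : tsupport (fun ξ : ℝ => (ξ : ℂ) * g ξ) ⊆ Icc (-r) r :=
    tsupport_mul_subset_right.trans hsupp
  have hc' : Continuous fun ξ : ℝ => (ξ : ℂ) * g ξ := by fun_prop
  have hbound : ∀ w ∈ Metric.ball w₀ 1, ∀ ξ : ℝ, ‖(ξ : ℂ) * g ξ * cexp (ξ * w)‖ ≤
      ‖(ξ : ℂ) * g ξ‖ * Real.exp (r * |w₀.re| + |r|) := by
    intro w hw ξ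
    refine (norm_mul_cexp_le hsupp' w ξ).trans
      (mul_le_mul_of_nonneg_left (Real.exp_le_exp.2 ?_) (norm_nonneg _))
    have := mul_abs_re_le r w w₀
    have hw : ‖w - w₀‖ < 1 := by simpa [dist_eq_norm] using hw
    nlinarith [abs_nonneg r]
  refine (hasDerivAt_integral_of_dominated_loc_of_deriv_le
    (F := fun w ξ => g ξ * cexp (ξ * w)) (F' := fun w ξ => ξ * g ξ * cexp (ξ * w))
    (Metric.ball_mem_nhds w₀ one_pos)
    (Eventually.of_forall fun w => (hc.mul (by fun_prop)).aestronglyMeasurable)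
    (integrable_mul_cexp hc (hasCompactSupport_of_tsupport_subset_Icc hsupp) w₀)
    (hc'.mul (by fun_prop)).aestronglyMeasurable
    (ae_of_all _ fun ξ w hw => hbound w hw ξ)
    ((hc'.integrable_of_hasCompactSupport
      (hasCompactSupport_of_tsupport_subset_Icc hsupp')).norm.mul_const _)
    (ae_of_all _ fun ξ w _ => ?_)).2
  have := ((hasDerivAt_id w).const_mul (ξ : ℂ)).cexp.const_mul (g ξ)
  exact this.congr_deriv (by simp; ring)

lemma fourierLaplace_deriv (hg : ContDiff ℝ 1 g) (hs : HasCompactSupport g) (w : ℂ) :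
    fourierLaplace (deriv g) w = -(w * fourierLaplace g w) := by
  have hu : ∀ ξ : ℝ, HasDerivAt (fun ξ : ℝ => cexp (ξ * w)) (w * cexp (ξ * w)) ξ := fun ξ => by
    simpa [mul_comm] using ((hasDerivAt_id (ξ : ℂ)).mul_const w).cexp.comp_ofReal
  have h1 : Integrable fun ξ : ℝ => cexp (ξ * w) * deriv g ξ := by
    simpa only [mul_comm] using integrable_mul_cexp (hg.continuous_deriv le_rfl) hs.deriv w
  have h2 : Integrable fun ξ : ℝ => w * cexp (ξ * w) * g ξ := by
    simpa only [mul_comm, mul_left_comm] using (integrable_mul_cexp hg.continuous hs w).const_mul w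
  have h3 : Integrable fun ξ : ℝ => cexp (ξ * w) * g ξ := by
    simpa only [mul_comm] using integrable_mul_cexp hg.continuous hs w
  have key := integral_mul_deriv_eq_deriv_mul_of_integrable (fun ξ _ => hu ξ)
    (fun ξ _ => (hg.differentiable one_ne_zero ξ).hasDerivAt) h1 h2 h3
  simp only [fourierLaplace, ← integral_const_mul]
  simpa only [mul_comm, mul_left_comm] using key

lemma fourierLaplace_iteratedDeriv (hg : ContDiff ℝ ∞ g) (hs : HasCompactSupport g) (n : ℕ)
    (w : ℂ) : fourierLaplace (iteratedDeriv n g) w = (-w) ^ n * fourierLaplace g w := by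
  induction n generalizing g with
  | zero => simp
  | succ n ih =>
    rw [iteratedDeriv_succ', ih (contDiff_infty_iff_deriv.1 hg).2 hs.deriv,
      fourierLaplace_deriv (hg.of_le (by norm_cast)) hs]
    ring

lemma tsupport_iteratedDeriv_subset (n : ℕ) : tsupport (iteratedDeriv n g) ⊆ tsupport g := by
  induction n generalizing g with
  | zero => simp
  | succ n ih => rw [iteratedDeriv_succ']; exact ih.trans tsupport_deriv_subset

theorem hasRapidDecayOfType_fourierLaplace (hg : ContDiff ℝ ∞ g)
    (hsupp : tsupport g ⊆ Icc (-r) r) : HasRapidDecayOfType r (fourierLaplace g) := by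
  refine .of_norm_pow_mul_le fun N => ⟨∫ ξ, ‖iteratedDeriv N g ξ‖, fun z => ?_⟩
  calc ‖z‖ ^ N * ‖fourierLaplace g z‖ = ‖fourierLaplace (iteratedDeriv N g) z‖ := by
        rw [fourierLaplace_iteratedDeriv hg (hasCompactSupport_of_tsupport_subset_Icc hsupp),
          norm_mul, norm_pow, norm_neg]
    _ ≤ _ := norm_fourierLaplace_le (hg.continuous_iteratedDeriv N (by norm_cast; exact le_top))
        ((tsupport_iteratedDeriv_subset N).trans hsupp) z

lemma fourier_eq_fourierLaplace (s : ℝ) :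
    𝓕 g s = fourierLaplace g (I * ((-2 * Real.pi * s : ℝ) : ℂ)) := by
  rw [Real.fourier_real_eq_integral_exp_smul, fourierLaplace]
  congr 1 with ξ
  rw [smul_eq_mul, mul_comm]
  push_cast
  ring_nf

theorem integral_fourierLaplace_I_mul (hg : Integrable g) (h0 : ContinuousAt g 0)
    (hK : Integrable fun v : ℝ => fourierLaplace g (I * v)) :
    ∫ v : ℝ, fourierLaplace g (I * v) = 2 * Real.pi * g 0 := by
  have hπ : (-2 * Real.pi) ≠ 0 := by positivity
  have hF : 𝓕 g = fun s : ℝ => fourierLaplace g (I * ((-2 * Real.pi * s : ℝ) : ℂ)) :=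
    funext fourier_eq_fourierLaplace
  have hinv : ∫ s, 𝓕 g s = g 0 := by
    simpa [Real.fourierInv_eq] using hg.fourierInv_fourier_eq (hF ▸ hK.comp_mul_left' hπ) h0
  have hsub : (fun v : ℝ => fourierLaplace g (I * v)) =
      fun v => 𝓕 g ((-2 * Real.pi)⁻¹ * v) := by
    ext v
    rw [fourier_eq_fourierLaplace, mul_inv_cancel_left₀ hπ]
  rw [hsub, Measure.integral_comp_mul_left (fun s => 𝓕 g s), hinv, inv_inv,
    neg_mul, abs_neg, abs_of_pos (by positivity), Complex.real_smul]
  push_cast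
  ring

end FourierLaplace

section RealDilation

variable {ψ : ℝ → ℂ} {c : ℝ}

lemma integral_mul_comp_mul_left (hc : 0 < c) : ∫ u, (c : ℂ) * ψ (c * u) = ∫ v, ψ v := by
  rw [integral_const_mul, Measure.integral_comp_mul_left ψ c, abs_of_pos (inv_pos.2 hc),
    Complex.real_smul, ← mul_assoc, ← ofReal_mul, mul_inv_cancel₀ hc.ne', ofReal_one, one_mul]

lemma MeasureTheory.Integrable.mul_comp_mul_left (hψ : Integrable ψ) (hc : c ≠ 0) :
    Integrable fun u => (c : ℂ) * ψ (c * u) :=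
  (hψ.comp_mul_left' hc).const_mul _

lemma moment_mul_comp_mul_left_le (hc : 1 ≤ c) (N : ℕ) (u : ℝ) :
    |u| * (1 + |u|) ^ N * ‖(c : ℂ) * ψ (c * u)‖ ≤
      c⁻¹ * (c * (|c * u| * (1 + |c * u|) ^ N * ‖ψ (c * u)‖)) := by
  have hc0 : 0 < c := zero_lt_one.trans_le hc
  rw [norm_mul, norm_real, Real.norm_of_nonneg hc0.le, abs_mul, abs_of_pos hc0,
    inv_mul_cancel_left₀ hc0.ne']
  have hu : 1 + |u| ≤ 1 + c * |u| := by nlinarith [abs_nonneg u]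
  calc |u| * (1 + |u|) ^ N * (c * ‖ψ (c * u)‖) = c * |u| * (1 + |u|) ^ N * ‖ψ (c * u)‖ := by ring
    _ ≤ c * |u| * (1 + c * |u|) ^ N * ‖ψ (c * u)‖ := by gcongr

lemma integral_moment_mul_comp_mul_left_le {N : ℕ}
    (hψ : Integrable fun v => |v| * (1 + |v|) ^ N * ‖ψ v‖) (hc : 1 ≤ c) :
    ∫ u, |u| * (1 + |u|) ^ N * ‖(c : ℂ) * ψ (c * u)‖ ≤
      c⁻¹ * ∫ v, |v| * (1 + |v|) ^ N * ‖ψ v‖ := by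
  have hc0 : 0 < c := zero_lt_one.trans_le hc
  set G : ℝ → ℝ := fun v => |v| * (1 + |v|) ^ N * ‖ψ v‖
  calc _ ≤ ∫ u, c⁻¹ * (c * G (c * u)) :=
        integral_mono_of_nonneg (ae_of_all _ fun u => by positivity)
          (((hψ.comp_mul_left' hc0.ne').const_mul c).const_mul c⁻¹)
          (ae_of_all _ (moment_mul_comp_mul_left_le hc N))
    _ = c⁻¹ * ∫ v, G v := by
        rw [integral_const_mul, integral_const_mul, Measure.integral_comp_mul_left G c,
          abs_of_pos (inv_pos.2 hc0), smul_eq_mul, mul_inv_cancel_left₀ hc0.ne']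

lemma integrable_moment_mul_comp_mul_left {N : ℕ}
    (hψ : Integrable fun v => |v| * (1 + |v|) ^ N * ‖ψ v‖) (hψc : Continuous ψ)
    (hc : 1 ≤ c) : Integrable fun u => |u| * (1 + |u|) ^ N * ‖(c : ℂ) * ψ (c * u)‖ := by
  have hc0 : 0 < c := zero_lt_one.trans_le hc
  refine (((hψ.comp_mul_left' hc0.ne').const_mul c).const_mul c⁻¹).mono' ?_
    (ae_of_all _ fun u => ?_)
  · exact Continuous.aestronglyMeasurable (by fun_prop)
  · rw [Real.norm_of_nonneg (by positivity)]
    exact moment_mul_comp_mul_left_le hc N u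

end RealDilation

section StripGeometry

variable {a : ℝ}

lemma stripO_eq_preimage : StripO a = re ⁻¹' Ioo (-a) a := by
  ext z; simp [StripO, abs_lt]

lemma isOpen_stripO : IsOpen (StripO a) :=
  stripO_eq_preimage ▸ isOpen_Ioo.preimage continuous_re

lemma convex_stripO : Convex ℝ (StripO a) :=
  stripO_eq_preimage ▸ (convex_Ioo (-a) a).linear_preimage reLm

lemma closure_stripO (ha : 0 < a) : closure (StripO a) = Strip a := by
  rw [stripO_eq_preimage, closure_preimage_re, closure_Ioo (by linarith)]
  ext z; simp [Strip, abs_le]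

lemma stripO_subset_strip : StripO a ⊆ Strip a := fun _ hz => le_of_lt (α := ℝ) hz

lemma sub_I_mul_mem_stripO {z : ℂ} (hz : z ∈ StripO a) (u : ℝ) : z - I * u ∈ StripO a := by
  simpa [StripO] using hz

lemma I_mul_mem_stripO (ha : 0 < a) (t : ℝ) : I * t ∈ StripO a := by
  simpa [StripO] using ha

end StripGeometry

lemma weighted_norm_sub_le {f : ℂ → ℂ} {z w : ℂ} {N : ℕ} {C : ℝ}
    (hf : ∀ x ∈ segment ℝ z w, DifferentiableAt ℂ f x)
    (hC : ∀ x ∈ segment ℝ z w, (1 + ‖x‖) ^ N * ‖deriv f x‖ ≤ C) :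
    (1 + ‖z‖) ^ N * ‖f z - f w‖ ≤ C * (1 + ‖z - w‖) ^ N * ‖z - w‖ := by
  set P : ℂ := (((1 + ‖z‖) ^ N : ℝ) : ℂ)
  have hP : ‖P‖ = (1 + ‖z‖) ^ N := by rw [norm_real, Real.norm_of_nonneg (by positivity)]
  have hderiv : ∀ x ∈ segment ℝ z w, ‖deriv (fun y => P * f y) x‖ ≤ C * (1 + ‖z - w‖) ^ N := by
    intro x hx
    rw [deriv_const_mul P (hf x hx), norm_mul, hP]
    have hxz : ‖x - z‖ ≤ ‖w - z‖ := norm_sub_le_of_mem_segment hx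
    calc (1 + ‖z‖) ^ N * ‖deriv f x‖ ≤ ((1 + ‖x‖) * (1 + ‖z - w‖)) ^ N * ‖deriv f x‖ := by
          gcongr
          refine (one_add_norm_le_mul z x).trans ?_
          gcongr
          rwa [norm_sub_rev, norm_sub_rev z]
      _ = (1 + ‖z - w‖) ^ N * ((1 + ‖x‖) ^ N * ‖deriv f x‖) := by rw [mul_pow]; ring
      _ ≤ (1 + ‖z - w‖) ^ N * C := by gcongr; exact hC x hx
      _ = _ := mul_comm _ _
  have := (convex_segment z w).norm_image_sub_le_of_norm_deriv_le
    (fun x hx => (hf x hx).const_mul P) hderiv (right_mem_segment ℝ z w) (left_mem_segment ℝ z w)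
  rwa [← mul_sub, norm_mul, hP] at this

lemma weighted_norm_sub_verticalAverage_le {a : ℝ} {f : ℂ → ℂ} {μ : ℝ → ℂ} {N : ℕ} {C : ℝ}
    {z : ℂ} (hf : DifferentiableOn ℂ f (StripO a))
    (hC : ∀ x ∈ StripO a, (1 + ‖x‖) ^ N * ‖deriv f x‖ ≤ C) (hμ : Integrable μ)
    (hμ1 : ∫ u, μ u = 1) (hmom : Integrable fun u => |u| * (1 + |u|) ^ N * ‖μ u‖)
    (hz : z ∈ StripO a) :
    (1 + ‖z‖) ^ N * ‖f z - verticalAverage f μ z‖ ≤ C * ∫ u, |u| * (1 + |u|) ^ N * ‖μ u‖ := by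
  set P : ℝ := (1 + ‖z‖) ^ N
  have hP : 0 < P := by positivity
  have hpt : ∀ u : ℝ, P * ‖f z - f (z - I * u)‖ ≤ C * (|u| * (1 + |u|) ^ N) := fun u => by
    have hseg := convex_stripO.segment_subset hz (sub_I_mul_mem_stripO hz u)
    have := weighted_norm_sub_le
      (fun x hx => hf.differentiableAt (isOpen_stripO.mem_nhds (hseg hx)))
      (fun x hx => hC x (hseg hx))
    have hu : ‖z - (z - I * u)‖ = |u| := by simp
    rw [hu] at this
    linarith
  have hmeas : AEStronglyMeasurable fun u : ℝ => (f z - f (z - I * u)) * μ u :=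
    ((continuous_const.sub (hf.continuousOn.comp_continuous (by fun_prop)
      (sub_I_mul_mem_stripO hz))).aestronglyMeasurable).mul hμ.aestronglyMeasurable
  have hdiff : Integrable fun u : ℝ => (f z - f (z - I * u)) * μ u := by
    refine (hmom.const_mul (C / P)).mono' hmeas (ae_of_all _ fun u => ?_)
    rw [norm_mul, div_mul_eq_mul_div, le_div_iff₀ hP]
    nlinarith [hpt u, norm_nonneg (μ u)]
  have hrep : f z - verticalAverage f μ z = ∫ u : ℝ, (f z - f (z - I * u)) * μ u := by
    have hint : Integrable fun u : ℝ => f (z - I * u) * μ u :=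
      ((hμ.const_mul (f z)).sub hdiff).congr
        (ae_of_all _ fun u => by simp only [Pi.sub_apply]; ring)
    simp_rw [sub_mul]
    rw [integral_sub (hμ.const_mul _) hint, integral_const_mul, hμ1, mul_one, verticalAverage]
  calc P * ‖f z - verticalAverage f μ z‖ = ‖∫ u : ℝ, P • ((f z - f (z - I * u)) * μ u)‖ := by
        rw [hrep, integral_smul, norm_smul, Real.norm_of_nonneg hP.le]
    _ ≤ ∫ u, C * (|u| * (1 + |u|) ^ N * ‖μ u‖) := by
        refine norm_integral_le_of_norm_le (hmom.const_mul C) (ae_of_all _ fun u => ?_)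
        rw [norm_smul, Real.norm_of_nonneg hP.le, norm_mul, ← mul_assoc]
        calc P * ‖f z - f (z - I * u)‖ * ‖μ u‖ ≤ C * (|u| * (1 + |u|) ^ N) * ‖μ u‖ :=
              mul_le_mul_of_nonneg_right (hpt u) (norm_nonneg _)
          _ = _ := by ring
    _ = _ := integral_const_mul _ _

lemma hasDerivAt_verticalAverage {a : ℝ} {f : ℂ → ℂ} {μ : ℝ → ℂ} {z : ℂ}
    (hf : DifferentiableOn ℂ f (StripO a)) (hB : ∃ B, ∀ x ∈ StripO a, ‖f x‖ ≤ B)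
    (hB' : ∃ B, ∀ x ∈ StripO a, ‖deriv f x‖ ≤ B) (hμ : Integrable μ) (hz : z ∈ StripO a) :
    HasDerivAt (verticalAverage f μ) (verticalAverage (deriv f) μ z) z := by
  obtain ⟨B, hB⟩ := hB
  obtain ⟨B', hB'⟩ := hB'
  have hcont : ∀ {g : ℂ → ℂ}, ContinuousOn g (StripO a) → ∀ x ∈ StripO a,
      AEStronglyMeasurable fun u : ℝ => g (x - I * u) := fun hg x hx =>
    (hg.comp_continuous (by fun_prop) (sub_I_mul_mem_stripO hx)).aestronglyMeasurable
  have hf' : DifferentiableOn ℂ (deriv f) (StripO a) := hf.deriv isOpen_stripO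
  refine (hasDerivAt_integral_of_dominated_loc_of_deriv_le (bound := fun u => B' * ‖μ u‖)
    (F := fun x u => f (x - I * u) * μ u) (F' := fun x u => deriv f (x - I * u) * μ u)
    (isOpen_stripO.mem_nhds hz)
    (eventually_of_mem (isOpen_stripO.mem_nhds hz) fun x hx =>
      (hcont hf.continuousOn x hx).mul hμ.aestronglyMeasurable)
    (hμ.bdd_mul (hcont hf.continuousOn z hz)
      (ae_of_all _ fun u => hB _ (sub_I_mul_mem_stripO hz u)))
    ((hcont hf'.continuousOn z hz).mul hμ.aestronglyMeasurable)
    (ae_of_all _ fun u x hx => ?_) (hμ.norm.const_mul _) (ae_of_all _ fun u x hx => ?_)).2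
  · rw [norm_mul]
    exact mul_le_mul_of_nonneg_right (hB' _ (sub_I_mul_mem_stripO hx u)) (norm_nonneg _)
  · have hd := (hf.differentiableAt (isOpen_stripO.mem_nhds (sub_I_mul_mem_stripO hx u))).hasDerivAt
    simpa using (hd.comp x ((hasDerivAt_id x).sub_const (I * u))).mul_const (μ u)

lemma iteratedDeriv_verticalAverage {a : ℝ} {f : ℂ → ℂ} {μ : ℝ → ℂ}
    (hf : DifferentiableOn ℂ f (StripO a))
    (hB : ∀ k, ∃ B, ∀ x ∈ StripO a, ‖iteratedDeriv k f x‖ ≤ B) (hμ : Integrable μ) (k : ℕ) :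
    EqOn (iteratedDeriv k (verticalAverage f μ)) (verticalAverage (iteratedDeriv k f) μ)
      (StripO a) := by
  induction k with
  | zero => simp [EqOn]
  | succ k ih =>
    intro z hz
    rw [iteratedDeriv_succ, (eventuallyEq_of_mem (isOpen_stripO.mem_nhds hz) ih).deriv_eq]
    have := hasDerivAt_verticalAverage (hf.iteratedDeriv_of_isOpen isOpen_stripO k) (hB k)
      (by simpa [← iteratedDeriv_succ] using hB (k + 1)) hμ hz
    rw [this.deriv, ← iteratedDeriv_succ]

lemma eqOn_stripO_of_eq_I_mul {a : ℝ} (ha : 0 < a) {f g : ℂ → ℂ}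
    (hf : DifferentiableOn ℂ f (StripO a)) (hg : DifferentiableOn ℂ g (StripO a))
    (h : ∀ y : ℝ, f (I * y) = g (I * y)) : EqOn f g (StripO a) := by
  have hI : Tendsto (fun y : ℝ => I * y) (𝓝[≠] 0) (𝓝[≠] 0) := by
    refine tendsto_nhdsWithin_of_tendsto_nhds_of_eventually_within _ ?_ ?_
    · exact ((by fun_prop : Continuous fun y : ℝ => I * y).tendsto' 0 0 (by simp)).mono_left
        nhdsWithin_le_nhds
    · filter_upwards [self_mem_nhdsWithin] with y hy
      simpa using hy
  refine (hf.analyticOnNhd isOpen_stripO).eqOn_of_preconnected_of_frequently_eq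
    (hg.analyticOnNhd isOpen_stripO) convex_stripO.isPreconnected (z₀ := 0)
    (by simpa [StripO] using ha) ?_
  exact hI.frequently (Frequently.of_forall (p := fun y : ℝ => f (I * y) = g (I * y)) h)

section Kernel

def unitBump : ContDiffBump (0 : ℝ) := ⟨1 / 2, 1, by norm_num, by norm_num⟩

-- The factor `(2π)⁻¹` makes `∫ pwKernel (I * v) dv = 2π * pwBump 0` equal to `1`.
def pwBump (ξ : ℝ) : ℂ := (2 * Real.pi : ℂ)⁻¹ * (unitBump ξ : ℂ)

def pwKernel : ℂ → ℂ := fourierLaplace pwBump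

lemma contDiff_pwBump : ContDiff ℝ ∞ pwBump :=
  contDiff_const.mul (ofRealCLM.contDiff.comp unitBump.contDiff)

lemma tsupport_pwBump : tsupport pwBump ⊆ Icc (-1) 1 := by
  refine tsupport_mul_subset_right.trans ((tsupport_comp_subset ofReal_zero _).trans ?_)
  rw [unitBump.tsupport_eq, Real.closedBall_eq_Icc]
  norm_num [unitBump]

lemma differentiable_pwKernel : Differentiable ℂ pwKernel := fun w =>
  (hasDerivAt_fourierLaplace contDiff_pwBump.continuous tsupport_pwBump w).differentiableAt

lemma hasRapidDecayOfType_pwKernel : HasRapidDecayOfType 1 pwKernel :=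
  hasRapidDecayOfType_fourierLaplace contDiff_pwBump tsupport_pwBump

lemma continuous_pwKernel_I_mul : Continuous fun v : ℝ => pwKernel (I * v) :=
  differentiable_pwKernel.continuous.comp (by fun_prop)

lemma integral_pwKernel_I_mul : ∫ v : ℝ, pwKernel (I * v) = 1 := by
  have hbump : unitBump 0 = 1 := unitBump.one_of_mem_closedBall (by norm_num [unitBump])
  rw [pwKernel, integral_fourierLaplace_I_mul
    (contDiff_pwBump.continuous.integrable_of_hasCompactSupport
      (hasCompactSupport_of_tsupport_subset_Icc tsupport_pwBump))
    contDiff_pwBump.continuous.continuousAt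
    (hasRapidDecayOfType_pwKernel.rapidDecay_I_mul.integrable
      continuous_pwKernel_I_mul.aestronglyMeasurable)]
  simp only [pwBump, hbump, ofReal_one]
  field_simp

lemma integrable_moment_pwKernel_I_mul (N : ℕ) :
    Integrable fun v : ℝ => |v| * (1 + |v|) ^ N * ‖pwKernel (I * v)‖ := by
  have hK := continuous_pwKernel_I_mul
  refine (hasRapidDecayOfType_pwKernel.rapidDecay_I_mul.integrable_one_add_pow_mul
    hK.aestronglyMeasurable (N + 1)).mono' (Continuous.aestronglyMeasurable (by fun_prop))
    (ae_of_all _ fun v => ?_)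
  rw [Real.norm_of_nonneg (by positivity), pow_succ, mul_comm |v|]
  gcongr
  linarith

def pwMollifier (c u : ℝ) : ℂ := dilate c pwKernel (I * u)

lemma pwMollifier_eq (c u : ℝ) : pwMollifier c u = c * pwKernel (I * ((c * u : ℝ) : ℂ)) := by
  simp only [pwMollifier, dilate]
  push_cast
  ring_nf

lemma integrable_pwMollifier {c : ℝ} (hc : 0 < c) : Integrable fun u => pwMollifier c u := by
  simp_rw [pwMollifier_eq]
  exact (hasRapidDecayOfType_pwKernel.rapidDecay_I_mul.integrable
    continuous_pwKernel_I_mul.aestronglyMeasurable).mul_comp_mul_left hc.ne'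

lemma integral_pwMollifier {c : ℝ} (hc : 0 < c) : ∫ u, pwMollifier c u = 1 := by
  simp_rw [pwMollifier_eq]
  rw [integral_mul_comp_mul_left (ψ := fun v : ℝ => pwKernel (I * v)) hc, integral_pwKernel_I_mul]

lemma integrable_moment_pwMollifier {c : ℝ} (hc : 1 ≤ c) (N : ℕ) :
    Integrable fun u => |u| * (1 + |u|) ^ N * ‖pwMollifier c u‖ := by
  simp_rw [pwMollifier_eq]
  exact integrable_moment_mul_comp_mul_left (ψ := fun v : ℝ => pwKernel (I * v))
    (integrable_moment_pwKernel_I_mul N) continuous_pwKernel_I_mul hc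

lemma integral_moment_pwMollifier_le {c : ℝ} (hc : 1 ≤ c) (N : ℕ) :
    ∫ u, |u| * (1 + |u|) ^ N * ‖pwMollifier c u‖ ≤
      c⁻¹ * ∫ v : ℝ, |v| * (1 + |v|) ^ N * ‖pwKernel (I * v)‖ := by
  simp_rw [pwMollifier_eq]
  exact integral_moment_mul_comp_mul_left_le (ψ := fun v : ℝ => pwKernel (I * v))
    (integrable_moment_pwKernel_I_mul N) hc

end Kernel

def pwApprox (F : ℂ → ℂ) (c : ℝ) : ℂ → ℂ :=
  verticalConv (fun t : ℝ => F (I * t)) (dilate c pwKernel)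

namespace StripSchwartz

variable {a : ℝ} {F : ℂ → ℂ} {Fd : ℕ → ℂ → ℂ}

lemma eq_iteratedDeriv (hF : StripSchwartz a F Fd) {k : ℕ} {z : ℂ} (hz : z ∈ StripO a) :
    Fd k z = iteratedDeriv k F z :=
  hF.2.2.2.1 k z hz

lemma differentiableOn_iteratedDeriv (hF : StripSchwartz a F Fd) (k : ℕ) :
    DifferentiableOn ℂ (iteratedDeriv k F) (StripO a) :=
  hF.2.1.iteratedDeriv_of_isOpen isOpen_stripO k

lemma exists_weighted_bound (hF : StripSchwartz a F Fd) (N k : ℕ) :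
    ∃ C, ∀ z ∈ StripO a, (1 + ‖z‖) ^ N * ‖iteratedDeriv k F z‖ ≤ C := by
  obtain ⟨C, hC⟩ := hF.2.2.2.2.2 N k
  exact ⟨C, fun z hz => hF.eq_iteratedDeriv hz ▸ hC z (stripO_subset_strip hz)⟩

lemma exists_bound (hF : StripSchwartz a F Fd) (k : ℕ) :
    ∃ B, ∀ z ∈ StripO a, ‖iteratedDeriv k F z‖ ≤ B := by
  simpa using hF.exists_weighted_bound 0 k

lemma continuous_I_mul (hF : StripSchwartz a F Fd) (ha : 0 < a) :
    Continuous fun t : ℝ => F (I * t) :=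
  hF.2.1.continuousOn.comp_continuous (by fun_prop) (I_mul_mem_stripO ha)

lemma rapidDecay_I_mul (hF : StripSchwartz a F Fd) (ha : 0 < a) :
    RapidDecay fun t : ℝ => F (I * t) := fun N => by
  obtain ⟨C, hC⟩ := hF.exists_weighted_bound N 0
  exact ⟨C, fun t => by simpa using hC _ (I_mul_mem_stripO ha t)⟩

lemma differentiable_pwApprox (hF : StripSchwartz a F Fd) (ha : 0 < a) {c : ℝ} (hc : 0 < c) :
    Differentiable ℂ (pwApprox F c) :=
  (hasRapidDecayOfType_pwKernel.dilate hc).differentiable_verticalConv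
    (differentiable_pwKernel.dilate c)
    ((hF.rapidDecay_I_mul ha).integrable (hF.continuous_I_mul ha).aestronglyMeasurable)

lemma hasRapidDecayOfType_pwApprox (hF : StripSchwartz a F Fd) (ha : 0 < a) {c : ℝ}
    (hc : 0 < c) : HasRapidDecayOfType c (pwApprox F c) := by
  simpa [pwApprox] using (hasRapidDecayOfType_pwKernel.dilate hc).verticalConv
    (hF.rapidDecay_I_mul ha) (hF.continuous_I_mul ha).aestronglyMeasurable

lemma pwApprox_eqOn (hF : StripSchwartz a F Fd) (ha : 0 < a) {c : ℝ} (hc : 0 < c) :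
    EqOn (pwApprox F c) (verticalAverage F (pwMollifier c)) (StripO a) := by
  refine eqOn_stripO_of_eq_I_mul ha (hF.differentiable_pwApprox ha hc).differentiableOn
    (fun z hz => ?_) fun y => ?_
  · have hderiv : ∃ B, ∀ x ∈ StripO a, ‖deriv F x‖ ≤ B := by
      simpa using hF.exists_bound 1
    exact (hasDerivAt_verticalAverage hF.2.1 (by simpa using hF.exists_bound 0) hderiv
      (integrable_pwMollifier hc) hz).differentiableAt.differentiableWithinAt
  · rw [pwApprox, verticalConv, verticalAverage, ← integral_sub_left_eq_self
      (fun t : ℝ => F (I * t) * dilate c pwKernel (I * y - I * t)) volume y]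
    congr 1 with u
    simp only [pwMollifier]
    push_cast
    ring_nf

lemma iteratedDeriv_pwApprox_eqOn (hF : StripSchwartz a F Fd) (ha : 0 < a) {c : ℝ} (hc : 0 < c)
    (k : ℕ) : EqOn (iteratedDeriv k (pwApprox F c))
      (verticalAverage (iteratedDeriv k F) (pwMollifier c)) (StripO a) := fun z hz => by
  rw [(hF.pwApprox_eqOn ha hc).iteratedDeriv_of_isOpen isOpen_stripO k hz]
  exact iteratedDeriv_verticalAverage hF.2.1 hF.exists_bound (integrable_pwMollifier hc) k hz

lemma norm_sub_iteratedDeriv_pwApprox_le (hF : StripSchwartz a F Fd) (ha : 0 < a) (N k : ℕ) :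
    ∃ C, ∀ c, 1 ≤ c → ∀ z ∈ Strip a,
      (1 + ‖z‖) ^ N * ‖Fd k z - iteratedDeriv k (pwApprox F c) z‖ ≤ C / c := by
  obtain ⟨C, hC⟩ := hF.exists_weighted_bound N (k + 1)
  have hC0 : 0 ≤ C := le_trans (by positivity) (hC 0 (by simpa [StripO] using ha))
  set M := ∫ v : ℝ, |v| * (1 + |v|) ^ N * ‖pwKernel (I * v)‖
  refine ⟨C * M, fun c hc z hz => ?_⟩
  have hc0 : 0 < c := one_pos.trans_le hc
  have hopen : ∀ x ∈ StripO a,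
      (1 + ‖x‖) ^ N * ‖Fd k x - iteratedDeriv k (pwApprox F c) x‖ ≤ C * M / c := by
    intro x hx
    rw [hF.eq_iteratedDeriv hx, hF.iteratedDeriv_pwApprox_eqOn ha hc0 k hx]
    calc _ ≤ C * ∫ u, |u| * (1 + |u|) ^ N * ‖pwMollifier c u‖ :=
          weighted_norm_sub_verticalAverage_le (hF.differentiableOn_iteratedDeriv k)
            (fun y hy => by rw [← iteratedDeriv_succ]; exact hC y hy) (integrable_pwMollifier hc0)
            (integral_pwMollifier hc0) (integrable_moment_pwMollifier hc N) hx
      _ ≤ C * (c⁻¹ * M) := by gcongr; exact integral_moment_pwMollifier_le hc N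
      _ = C * M / c := by ring
  have hcont : ContinuousOn
      (fun x => (1 + ‖x‖) ^ N * ‖Fd k x - iteratedDeriv k (pwApprox F c) x‖) (Strip a) :=
    (by fun_prop : Continuous fun x : ℂ => (1 + ‖x‖) ^ N).continuousOn.mul
      ((hF.2.2.2.2.1 k).sub ((hF.differentiable_pwApprox ha hc0).contDiff.continuous_iteratedDeriv
        k le_rfl).continuousOn).norm
  exact ContinuousWithinAt.closure_le (by rwa [closure_stripO ha])
    ((hcont z hz).mono stripO_subset_strip) continuousWithinAt_const hopen

end StripSchwartz

end

/-- **Density of Paley–Wiener functions in the strip-Schwartz space `𝓢(S_a)`**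
(the scalar content of Lemma 2.2.4 ii) of the paper): given `F ∈ 𝓢(S_a)`, `ε > 0` and `m`,
there is an entire function `h` of uniform exponential type with rapid decay such that all
strip seminorms of order `≤ m` of `F − h` are smaller than `ε`. -/
theorem stmt_8 (a : ℝ) (ha : 0 < a) (F : ℂ → ℂ) (Fd : ℕ → ℂ → ℂ)
    (hF : StripSchwartz a F Fd) (ε : ℝ) (hε : 0 < ε) (m : ℕ) :
    ∃ h : ℂ → ℂ, Differentiable ℂ h ∧
      (∃ R > (0 : ℝ), ∀ N : ℕ, ∃ C : ℝ, ∀ z : ℂ,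
        Real.exp (-(R * |z.re|)) * (1 + ‖z‖) ^ N * ‖h z‖ ≤ C) ∧
      ∀ N ≤ m, ∀ k ≤ m, ∀ z ∈ Strip a,
        (1 + ‖z‖) ^ N * ‖Fd k z - iteratedDeriv k h z‖ < ε := by
  have hev : ∀ᶠ c in atTop, ∀ N ∈ Iic m, ∀ k ∈ Iic m, ∀ z ∈ Strip a,
      (1 + ‖z‖) ^ N * ‖Fd k z - iteratedDeriv k (pwApprox F c) z‖ < ε := by
    refine (eventually_all_finite (finite_Iic m)).2 fun N _ =>
      (eventually_all_finite (finite_Iic m)).2 fun k _ => ?_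
    obtain ⟨C, hC⟩ := hF.norm_sub_iteratedDeriv_pwApprox_le ha N k
    have hlim : Tendsto (fun c : ℝ => C / c) atTop (𝓝 0) := tendsto_const_nhds.div_atTop tendsto_id
    filter_upwards [eventually_ge_atTop 1, hlim.eventually (gt_mem_nhds hε)] with c hc hcε z hz
    exact (hC c hc z hz).trans_lt hcε
  obtain ⟨c, hc, hcε⟩ := ((eventually_ge_atTop 1).and hev).exists
  have hc0 : 0 < c := one_pos.trans_le hc
  exact ⟨pwApprox F c, hF.differentiable_pwApprox ha hc0,
    ⟨c, hc0, (hF.hasRapidDecayOfType_pwApprox ha hc0).exists_exp_neg_mul_le⟩, hcε⟩
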